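/- arXiv:2012.06956 — 4 statements merged into one kernel-verified Lean document; each statement's English description precedes it below -/
import Mathlib

section
/- Let n be a positive integer, y ∈ ℝⁿ, and let x ∈ {0,1}ⁿ. Suppose i and j are distinct indices with x_i = 1, x_j = 0 and y_i ≤ y_j. Define x' ∈ {0,1}ⁿ by x'_i = 0, x'_j = 1, and x'_ℓ = x_ℓ for all ℓ ∉ {i, j}. Then x' has the same number of coordinates equal to 1 as x, and ‖x' − y‖₂ ≤ ‖x − y‖₂. -/
open Equiv

section SwapCoordinates

variable {ι : Type*} [Fintype ι] [DecidableEq ι]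

/-- Only the coordinates `i` and `j` change, and there the difference of squares is bilinear. -/
theorem sum_sq_sub_comp_swap (x y : ι → ℝ) (i j : ι) :
    ∑ ℓ, (x (swap i j ℓ) - y ℓ) ^ 2
      = ∑ ℓ, (x ℓ - y ℓ) ^ 2 + 2 * (x i - x j) * (y i - y j) := by
  obtain rfl | hij := eq_or_ne i j
  · simp
  have hdiff : ∑ ℓ, ((x (swap i j ℓ) - y ℓ) ^ 2 - (x ℓ - y ℓ) ^ 2)
      = 2 * (x i - x j) * (y i - y j) := by
    rw [Fintype.sum_eq_add i j hij fun ℓ hℓ => by rw [swap_apply_of_ne_of_ne hℓ.1 hℓ.2, sub_self],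
      swap_apply_left, swap_apply_right]
    ring
  rw [← hdiff, Finset.sum_sub_distrib, add_sub_cancel]

theorem EuclideanSpace.norm_sub_le_of_swap (x x' y : EuclideanSpace ℝ ι) (i j : ι)
    (hx' : ∀ ℓ, x' ℓ = x (swap i j ℓ)) (hxy : (x i - x j) * (y i - y j) ≤ 0) :
    ‖x' - y‖ ≤ ‖x - y‖ := by
  refine (sq_le_sq₀ (norm_nonneg _) (norm_nonneg _)).mp ?_
  simp only [EuclideanSpace.real_norm_sq_eq, PiLp.sub_apply, hx', sum_sq_sub_comp_swap]
  linarith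

end SwapCoordinates

theorem stmt_1_general (n : ℕ) (y x x' : EuclideanSpace ℝ (Fin n))
    (i j : Fin n) (hij : i ≠ j)
    (hxi : x i = 1) (hxj : x j = 0) (hyij : y i ≤ y j)
    (hx' : ∀ ℓ, x' ℓ = if ℓ = i then 0 else if ℓ = j then 1 else x ℓ) :
    (Finset.univ.filter fun ℓ => x' ℓ = 1).card
      = (Finset.univ.filter fun ℓ => x ℓ = 1).card
    ∧ ‖x' - y‖ ≤ ‖x - y‖ := by
  have hswap : ∀ ℓ, x' ℓ = x (swap i j ℓ) := by
    intro ℓ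
    rw [hx' ℓ]
    obtain rfl | hℓi := eq_or_ne ℓ i
    · simp [hxj]
    obtain rfl | hℓj := eq_or_ne ℓ j
    · simp [hxi, hij.symm]
    · rw [swap_apply_of_ne_of_ne hℓi hℓj, if_neg hℓi, if_neg hℓj]
  refine ⟨Finset.card_equiv (swap i j) fun ℓ => by simp [hswap], ?_⟩
  exact EuclideanSpace.norm_sub_le_of_swap x x' y i j hswap (by rw [hxi, hxj]; linarith)

/-- Swap step in the correctness proof of the mask projection algorithm. -/
theorem stmt_1 (n : ℕ) (hn : 0 < n) (y x x' : EuclideanSpace ℝ (Fin n))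
    (hx01 : ∀ ℓ, x ℓ = 0 ∨ x ℓ = 1)
    (i j : Fin n) (hij : i ≠ j)
    (hxi : x i = 1) (hxj : x j = 0) (hyij : y i ≤ y j)
    (hx' : ∀ ℓ, x' ℓ = if ℓ = i then 0 else if ℓ = j then 1 else x ℓ) :
    (Finset.univ.filter fun ℓ => x' ℓ = 1).card
      = (Finset.univ.filter fun ℓ => x ℓ = 1).card
    ∧ ‖x' - y‖ ≤ ‖x - y‖ :=
  stmt_1_general n y x x' i j hij hxi hxj hyij hx'
end

section
/- Let n be a positive integer, k ≤ n, and y ∈ ℝⁿ. Let T̂ be a set of indices with |T̂| = k such that y_i ≥ y_j for every i ∈ T̂ and every j ∉ T̂, and let x̂ ∈ {0,1}ⁿ be the indicator vector of T̂ (x̂_i = 1 if i ∈ T̂ and x̂_i = 0 otherwise). Then for every x ∈ {0,1}ⁿ having exactly k coordinates equal to 1, ‖x̂ − y‖₂ ≤ ‖x − y‖₂. In other words, x̂ is a Euclidean projection of y onto the set S = {x ∈ {0,1}ⁿ : x has exactly k ones}. -/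
/-!
For a 0/1 vector `z` with support `A`, `‖z - y‖² = #A - 2 ∑_{i ∈ A} y i + ‖y‖²`, so among
supports of size `k` the distance to `y` is smallest when `∑_{i ∈ A} y i` is largest. A set `T`
of `k` top indices wins against any `A` of the same size: `A \ T` and `T \ A` have equal size and
every entry indexed by the latter dominates every entry indexed by the former.
-/

open Finset

namespace Finset

variable {α : Type*} {s t : Finset α} {f : α → ℝ}

theorem sum_le_sum_of_card_eq_of_forall_le (hst : #s = #t)
    (hle : ∀ j ∈ s, ∀ i ∈ t, f j ≤ f i) : ∑ j ∈ s, f j ≤ ∑ i ∈ t, f i := by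
  let e := equivOfCardEq hst
  calc ∑ j ∈ s, f j = ∑ a : s, f a := (sum_coe_sort s f).symm
    _ ≤ ∑ a : s, f (e a) := sum_le_sum fun a _ => hle a a.2 (e a) (e a).2
    _ = ∑ i ∈ t, f i := (e.sum_comp fun b => f b).trans (sum_coe_sort t f)

theorem sum_le_sum_of_card_eq_of_top [DecidableEq α] (hst : #s = #t)
    (htop : ∀ i ∈ t, ∀ j ∉ t, f j ≤ f i) : ∑ j ∈ s, f j ≤ ∑ i ∈ t, f i := by
  have hdiff : ∑ j ∈ s \ t, f j ≤ ∑ i ∈ t \ s, f i :=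
    sum_le_sum_of_card_eq_of_forall_le (card_sdiff_comm hst) fun j hj i hi =>
      htop i (mem_sdiff.mp hi).1 j (mem_sdiff.mp hj).2
  rw [← sum_inter_add_sum_sdiff s t, ← sum_inter_add_sum_sdiff t s, inter_comm]
  linarith

end Finset

theorem EuclideanSpace.norm_sub_sq_of_eq_indicator {ι : Type*} [Fintype ι] [DecidableEq ι]
    (A : Finset ι) (z y : EuclideanSpace ℝ ι) (hz : ∀ i, z i = if i ∈ A then 1 else 0) :
    ‖z - y‖ ^ 2 = #A - 2 * ∑ i ∈ A, y i + ‖y‖ ^ 2 := by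
  have hterm : ∀ i, (z - y) i ^ 2 = (if i ∈ A then 1 - 2 * y i else 0) + y i ^ 2 := by
    intro i
    rw [PiLp.sub_apply, hz i]
    split_ifs <;> ring
  rw [real_norm_sq_eq, real_norm_sq_eq, Finset.sum_congr rfl fun i _ => hterm i,
    sum_add_distrib, sum_ite_mem, univ_inter, sum_sub_distrib, ← mul_sum]
  simp

theorem stmt_2_general (n k : ℕ)
    (y : EuclideanSpace ℝ (Fin n))
    (T : Finset (Fin n)) (hT : T.card = k)
    (hTtop : ∀ i ∈ T, ∀ j ∉ T, y j ≤ y i)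
    (xhat : EuclideanSpace ℝ (Fin n))
    (hxhat : ∀ i, xhat i = if i ∈ T then 1 else 0) :
    ∀ x : EuclideanSpace ℝ (Fin n),
      (∀ i, x i = 0 ∨ x i = 1) →
      (Finset.univ.filter fun i => x i = 1).card = k →
      ‖xhat - y‖ ≤ ‖x - y‖ := by
  intro x hx01 hxcard
  set A := univ.filter fun i => x i = 1
  have hxA : ∀ i, x i = if i ∈ A then 1 else 0 := by
    intro i
    rcases hx01 i with h | h <;> simp [A, h]
  have hsum : ∑ i ∈ A, y i ≤ ∑ i ∈ T, y i :=
    sum_le_sum_of_card_eq_of_top (hxcard.trans hT.symm) hTtop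
  refine (sq_le_sq₀ (norm_nonneg _) (norm_nonneg _)).mp ?_
  rw [EuclideanSpace.norm_sub_sq_of_eq_indicator T xhat y hxhat,
    EuclideanSpace.norm_sub_sq_of_eq_indicator A x y hxA, hT, hxcard]
  linarith

/-- Correctness of the mask projection: the indicator vector of a set of `k`
indices carrying the `k` largest entries of `y` is a Euclidean projection of
`y` onto the binary vectors with exactly `k` ones. -/
theorem stmt_2 (n k : ℕ) (hn : 0 < n) (hk : k ≤ n)
    (y : EuclideanSpace ℝ (Fin n))
    (T : Finset (Fin n)) (hT : T.card = k)
    (hTtop : ∀ i ∈ T, ∀ j ∉ T, y j ≤ y i)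
    (xhat : EuclideanSpace ℝ (Fin n))
    (hxhat : ∀ i, xhat i = if i ∈ T then 1 else 0) :
    ∀ x : EuclideanSpace ℝ (Fin n),
      (∀ i, x i = 0 ∨ x i = 1) →
      (Finset.univ.filter fun i => x i = 1).card = k →
      ‖xhat - y‖ ≤ ‖x - y‖ :=
  stmt_2_general n k y T hT hTtop xhat hxhat
end

section
/- Let P, Q be positive integers, k ≤ Q, and Z ∈ ℝ^{P×Q}. Let Ĉ be a set of column indices with |Ĉ| = k such that the Euclidean norm of the q-th column of Z is at least the Euclidean norm of the q'-th column of Z for every q ∈ Ĉ and every q' ∉ Ĉ. Define Ẑ ∈ ℝ^{P×Q} by keeping the columns of Z indexed by Ĉ intact and setting all other columns to zero. Then for every matrix W ∈ ℝ^{P×Q} having at most k nonzero columns, ‖Ẑ − Z‖_F ≤ ‖W − Z‖_F. -/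
/-- Frobenius norm of a real `P × Q` matrix. -/
noncomputable def frobNorm {P Q : ℕ} (A : Matrix (Fin P) (Fin Q) ℝ) : ℝ :=
  Real.sqrt (∑ p, ∑ q, (A p q) ^ 2)

/-- Euclidean (ℓ₂) norm of the `q`-th column of a real `P × Q` matrix. -/
noncomputable def colNorm {P Q : ℕ} (A : Matrix (Fin P) (Fin Q) ℝ) (q : Fin Q) : ℝ :=
  Real.sqrt (∑ p, (A p q) ^ 2)

/-!
Both `Ẑ - Z` and `W - Z` are compared column by column. The error of `Ẑ` is the total squared
norm of the columns of `Z` outside `C`, while `W - Z` agrees with `-Z` on every column outside the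
support `S` of `W`, so its error is at least the total squared norm of the columns of `Z` outside
`S`. Since `#S ≤ #C` and `C` collects the columns of largest norm, the columns in `S` carry no
more squared norm than those in `C`, hence those outside `S` carry at least as much as those
outside `C`.
-/

theorem Finset.sum_le_sum_of_card_le_of_forall_le {ι M : Type*} [AddCommMonoid M] [LinearOrder M]
    [IsOrderedAddMonoid M] {f : ι → M} {s t : Finset ι} (hf : ∀ i ∈ t, 0 ≤ f i)
    (hcard : s.card ≤ t.card) (htop : ∀ i ∈ t, ∀ j ∉ t, f j ≤ f i) :
    ∑ i ∈ s, f i ≤ ∑ i ∈ t, f i := by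
  classical
  rw [← sum_inter_add_sum_sdiff s t, ← sum_inter_add_sum_sdiff t s, inter_comm]
  gcongr _ + ?_
  have hcard' : (s \ t).card ≤ (t \ s).card := card_sdiff_le_card_sdiff_iff.mpr hcard
  rcases (t \ s).eq_empty_or_nonempty with hts | hts
  · rw [hts, card_empty, Nat.le_zero, card_eq_zero] at hcard'
    rw [hcard', hts]
  -- the least value of `f` on `t \ s` separates `f` on `s \ t` from `f` on `t \ s`
  obtain ⟨m, hm, hmin⟩ := exists_min_image _ f hts
  calc ∑ i ∈ s \ t, f i
      ≤ (s \ t).card • f m :=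
        sum_le_card_nsmul _ _ _ fun j hj ↦ htop m (mem_sdiff.1 hm).1 j (mem_sdiff.1 hj).2
    _ ≤ (t \ s).card • f m := nsmul_le_nsmul_left (hf m (mem_sdiff.1 hm).1) hcard'
    _ ≤ ∑ i ∈ t \ s, f i := card_nsmul_le_sum _ _ _ hmin

section ColumnNorms

variable {P Q : ℕ}

theorem colNorm_nonneg (A : Matrix (Fin P) (Fin Q) ℝ) (q : Fin Q) : 0 ≤ colNorm A q :=
  Real.sqrt_nonneg _

theorem colNorm_sq (A : Matrix (Fin P) (Fin Q) ℝ) (q : Fin Q) :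
    colNorm A q ^ 2 = ∑ p, A p q ^ 2 :=
  Real.sq_sqrt (Finset.sum_nonneg fun _ _ ↦ sq_nonneg _)

theorem frobNorm_eq_sqrt_sum_colNorm_sq (A : Matrix (Fin P) (Fin Q) ℝ) :
    frobNorm A = √(∑ q, colNorm A q ^ 2) := by
  simp_rw [colNorm_sq]
  rw [frobNorm, Finset.sum_comm]

theorem colNorm_sub_of_col_eq_zero {W : Matrix (Fin P) (Fin Q) ℝ} {q : Fin Q}
    (hW : ∀ p, W p q = 0) (Z : Matrix (Fin P) (Fin Q) ℝ) : colNorm (W - Z) q = colNorm Z q := by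
  simp [colNorm, hW]

theorem sum_compl_colNorm_sq_le {W : Matrix (Fin P) (Fin Q) ℝ} {S : Finset (Fin Q)}
    (hW : ∀ q ∉ S, ∀ p, W p q = 0) (Z : Matrix (Fin P) (Fin Q) ℝ) :
    ∑ q ∈ Sᶜ, colNorm Z q ^ 2 ≤ ∑ q, colNorm (W - Z) q ^ 2 := by
  calc ∑ q ∈ Sᶜ, colNorm Z q ^ 2
      = ∑ q ∈ Sᶜ, colNorm (W - Z) q ^ 2 := by
        refine Finset.sum_congr rfl fun q hq ↦ ?_
        rw [colNorm_sub_of_col_eq_zero (hW q (Finset.mem_compl.1 hq))]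
    _ ≤ ∑ q, colNorm (W - Z) q ^ 2 :=
        Finset.sum_le_univ_sum_of_nonneg fun _ ↦ sq_nonneg _

theorem sum_colNorm_sq_sub_eq {Z Zhat : Matrix (Fin P) (Fin Q) ℝ} {C : Finset (Fin Q)}
    (hZhat : ∀ p q, Zhat p q = if q ∈ C then Z p q else 0) :
    ∑ q, colNorm (Zhat - Z) q ^ 2 = ∑ q ∈ Cᶜ, colNorm Z q ^ 2 := by
  rw [← Finset.sum_add_sum_compl C, Finset.sum_eq_zero, zero_add]
  · refine Finset.sum_congr rfl fun q hq ↦ ?_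
    rw [colNorm_sub_of_col_eq_zero fun p ↦ by simp [hZhat, Finset.mem_compl.1 hq]]
  · intro q hq
    simp [colNorm, hZhat, hq]

end ColumnNorms

theorem stmt_5_general (P Q k : ℕ)
    (Z : Matrix (Fin P) (Fin Q) ℝ)
    (C : Finset (Fin Q)) (hC : C.card = k)
    (hCtop : ∀ q ∈ C, ∀ q' ∉ C, colNorm Z q' ≤ colNorm Z q)
    (Zhat : Matrix (Fin P) (Fin Q) ℝ)
    (hZhat : ∀ p q, Zhat p q = if q ∈ C then Z p q else 0) :
    ∀ W : Matrix (Fin P) (Fin Q) ℝ,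
      (Finset.univ.filter fun q => ∃ p, W p q ≠ 0).card ≤ k →
      frobNorm (Zhat - Z) ≤ frobNorm (W - Z) := by
  intro W hW
  set S := Finset.univ.filter fun q => ∃ p, W p q ≠ 0
  have hS : ∀ q ∉ S, ∀ p, W p q = 0 := by simp [S]
  have htop : ∑ q ∈ S, colNorm Z q ^ 2 ≤ ∑ q ∈ C, colNorm Z q ^ 2 :=
    Finset.sum_le_sum_of_card_le_of_forall_le (fun _ _ ↦ sq_nonneg _) (hC ▸ hW)
      fun q hq q' hq' ↦ pow_le_pow_left₀ (colNorm_nonneg Z q') (hCtop q hq q' hq') 2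
  have hcompl : ∑ q ∈ Cᶜ, colNorm Z q ^ 2 ≤ ∑ q ∈ Sᶜ, colNorm Z q ^ 2 := by
    linarith [Finset.sum_add_sum_compl C fun q ↦ colNorm Z q ^ 2,
      Finset.sum_add_sum_compl S fun q ↦ colNorm Z q ^ 2]
  rw [frobNorm_eq_sqrt_sum_colNorm_sq, frobNorm_eq_sqrt_sum_colNorm_sq, sum_colNorm_sq_sub_eq hZhat]
  exact Real.sqrt_le_sqrt (hcompl.trans (sum_compl_colNorm_sq_le hS Z))

/-- Correctness of the column-pruning projection: keeping the `k` columns of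
largest ℓ₂ norm intact and zeroing the remaining columns yields a Frobenius-norm
projection onto the set of matrices with at most `k` nonzero columns. -/
theorem stmt_5 (P Q k : ℕ) (hP : 0 < P) (hQ : 0 < Q) (hk : k ≤ Q)
    (Z : Matrix (Fin P) (Fin Q) ℝ)
    (C : Finset (Fin Q)) (hC : C.card = k)
    (hCtop : ∀ q ∈ C, ∀ q' ∉ C, colNorm Z q' ≤ colNorm Z q)
    (Zhat : Matrix (Fin P) (Fin Q) ℝ)
    (hZhat : ∀ p q, Zhat p q = if q ∈ C then Z p q else 0) :
    ∀ W : Matrix (Fin P) (Fin Q) ℝ,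
      (Finset.univ.filter fun q => ∃ p, W p q ≠ 0).card ≤ k →
      frobNorm (Zhat - Z) ≤ frobNorm (W - Z) :=
  stmt_5_general P Q k Z C hC hCtop Zhat hZhat
end

section
/- Let P, Q be positive integers, k ≤ P, and Z ∈ ℝ^{P×Q}. Let R̂ be a set of row indices with |R̂| = k such that the Euclidean norm of the p-th row of Z is at least the Euclidean norm of the p'-th row of Z for every p ∈ R̂ and every p' ∉ R̂. Define Ẑ ∈ ℝ^{P×Q} by keeping the rows of Z indexed by R̂ intact and setting all other rows to zero. Then for every matrix W ∈ ℝ^{P×Q} having at most k nonzero rows, ‖Ẑ − Z‖_F ≤ ‖W − Z‖_F. -/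
/-- Euclidean (ℓ₂) norm of the `p`-th row of a real `P × Q` matrix. -/
noncomputable def rowNorm {P Q : ℕ} (A : Matrix (Fin P) (Fin Q) ℝ) (p : Fin P) : ℝ :=
  Real.sqrt (∑ q, (A p q) ^ 2)

/-!
The squared Frobenius distance splits over rows. Zeroing a row of `Z` costs its squared row norm,
so `Ẑ` costs the sum of the squared norms of the rows outside `R̂`, while any `W` costs at least the
sum over the rows it zeroes. Thus it suffices that `R̂` maximises the sum of squared row norms
among index sets with at most `k` elements; for that, with `S` the nonzero rows of `W`, every row
in `S \ R̂` is dominated by every row in `R̂ \ S`, and there are at least as many of the latter.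
-/

open Finset

theorem Finset.sum_le_sum_of_card_le_of_forall_notMem_le {ι M : Type*} [AddCommMonoid M]
    [LinearOrder M] [IsOrderedAddMonoid M] {f : ι → M} {R S : Finset ι}
    (hf : ∀ i ∈ R, 0 ≤ f i) (hcard : #S ≤ #R) (htop : ∀ i ∈ R, ∀ j ∉ R, f j ≤ f i) :
    ∑ i ∈ S, f i ≤ ∑ i ∈ R, f i := by
  classical
  have hcard_sdiff : #(S \ R) ≤ #(R \ S) := by
    have h₁ := card_sdiff_add_card_inter S R
    have h₂ := card_sdiff_add_card_inter R S
    rw [inter_comm R S] at h₂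
    omega
  have hdiff : ∑ i ∈ S \ R, f i ≤ ∑ i ∈ R \ S, f i := by
    rcases (R \ S).eq_empty_or_nonempty with hempty | hne
    · have hSR : S \ R = ∅ := sdiff_eq_empty_iff_subset.mpr (by simpa [hempty] using hcard_sdiff)
      rw [hSR, hempty]
    obtain ⟨m, hm, hmin⟩ := exists_min_image (R \ S) f hne
    have hmR : m ∈ R := (mem_sdiff.mp hm).1
    calc ∑ i ∈ S \ R, f i ≤ #(S \ R) • f m :=
          sum_le_card_nsmul _ _ _ fun i hi => htop m hmR i (mem_sdiff.mp hi).2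
      _ ≤ #(R \ S) • f m := nsmul_le_nsmul_left (hf m hmR) hcard_sdiff
      _ ≤ ∑ i ∈ R \ S, f i := card_nsmul_le_sum _ _ _ hmin
  rw [← sum_inter_add_sum_sdiff S R, ← sum_inter_add_sum_sdiff R S, inter_comm]
  exact add_le_add_right hdiff _

section Frobenius

variable {P Q : ℕ}

theorem rowNorm_nonneg (A : Matrix (Fin P) (Fin Q) ℝ) (p : Fin P) : 0 ≤ rowNorm A p :=
  Real.sqrt_nonneg _

theorem rowNorm_sq (A : Matrix (Fin P) (Fin Q) ℝ) (p : Fin P) :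
    rowNorm A p ^ 2 = ∑ q, A p q ^ 2 :=
  Real.sq_sqrt (sum_nonneg fun _ _ => sq_nonneg _)

theorem frobNorm_eq_sqrt_sum_rowNorm_sq (A : Matrix (Fin P) (Fin Q) ℝ) :
    frobNorm A = √(∑ p, rowNorm A p ^ 2) := by
  simp only [frobNorm, rowNorm_sq]

theorem rowNorm_sub_of_row_eq_zero {W : Matrix (Fin P) (Fin Q) ℝ} {p : Fin P}
    (hW : ∀ q, W p q = 0) (Z : Matrix (Fin P) (Fin Q) ℝ) : rowNorm (W - Z) p = rowNorm Z p := by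
  simp [rowNorm, hW]

theorem rowNorm_sub_of_row_eq {W Z : Matrix (Fin P) (Fin Q) ℝ} {p : Fin P}
    (hW : ∀ q, W p q = Z p q) : rowNorm (W - Z) p = 0 := by
  simp [rowNorm, hW]

theorem frobNorm_sub_eq_of_rows_outside_zeroed {Z Zhat : Matrix (Fin P) (Fin Q) ℝ}
    {R : Finset (Fin P)} [DecidablePred (· ∈ R)]
    (hZhat : ∀ p q, Zhat p q = if p ∈ R then Z p q else 0) :
    frobNorm (Zhat - Z) = √(∑ p ∈ Rᶜ, rowNorm Z p ^ 2) := by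
  rw [frobNorm_eq_sqrt_sum_rowNorm_sq, ← sum_add_sum_compl R]
  congr 1
  have hin : ∀ p ∈ R, rowNorm (Zhat - Z) p ^ 2 = 0 := fun p hp => by
    rw [rowNorm_sub_of_row_eq fun q => by simp [hZhat, hp]]; norm_num
  have hout : ∀ p ∈ Rᶜ, rowNorm (Zhat - Z) p ^ 2 = rowNorm Z p ^ 2 := fun p hp => by
    rw [rowNorm_sub_of_row_eq_zero fun q => by simp [hZhat, mem_compl.mp hp]]
  rw [sum_eq_zero hin, sum_congr rfl hout, zero_add]

theorem sqrt_sum_compl_rowNorm_sq_le_frobNorm_sub {W : Matrix (Fin P) (Fin Q) ℝ}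
    {S : Finset (Fin P)} (hW : ∀ p ∉ S, ∀ q, W p q = 0) (Z : Matrix (Fin P) (Fin Q) ℝ) :
    √(∑ p ∈ Sᶜ, rowNorm Z p ^ 2) ≤ frobNorm (W - Z) := by
  classical
  rw [frobNorm_eq_sqrt_sum_rowNorm_sq, ← sum_add_sum_compl S]
  refine Real.sqrt_le_sqrt ?_
  have hout : ∀ p ∈ Sᶜ, rowNorm (W - Z) p ^ 2 = rowNorm Z p ^ 2 := fun p hp => by
    rw [rowNorm_sub_of_row_eq_zero (hW p (mem_compl.mp hp))]
  rw [sum_congr rfl hout]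
  exact le_add_of_nonneg_left (sum_nonneg fun _ _ => sq_nonneg _)

end Frobenius

open Classical in
theorem stmt_6_general (P Q k : ℕ)
    (Z : Matrix (Fin P) (Fin Q) ℝ)
    (R : Finset (Fin P)) (hR : R.card = k)
    (hRtop : ∀ p ∈ R, ∀ p' ∉ R, rowNorm Z p' ≤ rowNorm Z p)
    (Zhat : Matrix (Fin P) (Fin Q) ℝ)
    (hZhat : ∀ p q, Zhat p q = if p ∈ R then Z p q else 0) :
    ∀ W : Matrix (Fin P) (Fin Q) ℝ,
      (Finset.univ.filter fun p => ∃ q, W p q ≠ 0).card ≤ k →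
      frobNorm (Zhat - Z) ≤ frobNorm (W - Z) := by
  intro W hW
  set S := univ.filter fun p => ∃ q, W p q ≠ 0
  have hWS : ∀ p ∉ S, ∀ q, W p q = 0 := by simp [S]
  have hSR : ∑ p ∈ S, rowNorm Z p ^ 2 ≤ ∑ p ∈ R, rowNorm Z p ^ 2 :=
    sum_le_sum_of_card_le_of_forall_notMem_le (fun _ _ => sq_nonneg _) (hR ▸ hW)
      fun p hp p' hp' => pow_le_pow_left₀ (rowNorm_nonneg Z p') (hRtop p hp p' hp') 2
  have hcompl : ∑ p ∈ Rᶜ, rowNorm Z p ^ 2 ≤ ∑ p ∈ Sᶜ, rowNorm Z p ^ 2 := by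
    linarith [sum_add_sum_compl R fun p => rowNorm Z p ^ 2,
      sum_add_sum_compl S fun p => rowNorm Z p ^ 2]
  rw [frobNorm_sub_eq_of_rows_outside_zeroed hZhat]
  exact (Real.sqrt_le_sqrt hcompl).trans (sqrt_sum_compl_rowNorm_sq_le_frobNorm_sub hWS Z)

open Classical in
/-- Correctness of the filter-pruning projection: keeping the `k` rows of
largest ℓ₂ norm intact and zeroing the remaining rows yields a Frobenius-norm
projection onto the set of matrices with at most `k` nonzero rows. -/
theorem stmt_6 (P Q k : ℕ) (hP : 0 < P) (hQ : 0 < Q) (hk : k ≤ P)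
    (Z : Matrix (Fin P) (Fin Q) ℝ)
    (R : Finset (Fin P)) (hR : R.card = k)
    (hRtop : ∀ p ∈ R, ∀ p' ∉ R, rowNorm Z p' ≤ rowNorm Z p)
    (Zhat : Matrix (Fin P) (Fin Q) ℝ)
    (hZhat : ∀ p q, Zhat p q = if p ∈ R then Z p q else 0) :
    ∀ W : Matrix (Fin P) (Fin Q) ℝ,
      (Finset.univ.filter fun p => ∃ q, W p q ≠ 0).card ≤ k →
      frobNorm (Zhat - Z) ≤ frobNorm (W - Z) :=
  stmt_6_general P Q k Z R hR hRtop Zhat hZhat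
end
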